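/- arXiv:0811.2158 — 4 statements merged into one kernel-verified Lean document; each statement's English description precedes it below -/
import Mathlib

section
/- Let α ∈ ℕⁿ be a nonzero multi-index. There exist constants C > 0 and ω > 0 such that for all ε ∈ (0,1], the Lebesgue measure of the set { r ∈ [0,1]ⁿ : r₁^{2α₁} ⋯ rₙ^{2αₙ} ≤ ε } is at most C·ε^ω. Moreover, any ω < 1/(2|α|) works, where |α| = α₁ + ⋯ + αₙ. -/
open MeasureTheory Set

/-- For a nonzero multi-index `α ∈ ℕⁿ` and any `0 < ω < 1/(2|α|)` there is `C > 0`
such that the Lebesgue measure of `{ r ∈ [0,1]ⁿ : r^{2α} ≤ ε }` is at most `C ε^ω`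
for all `ε ∈ (0,1]`. -/
theorem stmt3 (n : ℕ) (α : Fin n → ℕ) (hα : α ≠ 0)
    (ω : ℝ) (hω0 : 0 < ω) (hω : ω < 1 / (2 * (∑ j, α j : ℝ))) :
    ∃ C : ℝ, 0 < C ∧ ∀ ε : ℝ, ε ∈ Ioc (0:ℝ) 1 →
      volume {r : Fin n → ℝ | (∀ j, r j ∈ Icc (0:ℝ) 1) ∧ ∏ j, r j ^ (2 * α j) ≤ ε}
        ≤ ENNReal.ofReal (C * ε ^ ω) := by
  have hn : ∃ j, 0 < α j := by
    by_contra h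
    push_neg at h
    exact hα (funext fun j => Nat.le_zero.mp (h j))
  have hS0 : 0 < ∑ j, α j := by
    obtain ⟨j, hj⟩ := hn
    exact Finset.sum_pos' (fun _ _ => Nat.zero_le _) ⟨j, Finset.mem_univ j, hj⟩
  set S : ℕ := ∑ j, α j with hSdef
  have hSr : (0:ℝ) < 2 * (S:ℝ) := by positivity
  have hn0 : 0 < n := by
    rcases hn with ⟨j, _⟩; exact j.pos
  refine ⟨n, by exact_mod_cast hn0, ?_⟩
  intro ε hε
  obtain ⟨hε0, hε1⟩ := hε
  set δ : ℝ := ε ^ ((1:ℝ)/(2*(S:ℝ))) with hδdef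
  have hδ0 : 0 < δ := Real.rpow_pos_of_pos hε0 _
  have hδpow : δ ^ (2*S) = ε := by
    rw [hδdef, ← Real.rpow_natCast (ε ^ ((1:ℝ)/(2*(S:ℝ)))) (2*S),
      ← Real.rpow_mul hε0.le]
    have : ((2*S : ℕ) : ℝ) = 2*(S:ℝ) := by push_cast; ring
    rw [this, one_div, inv_mul_cancel₀ hSr.ne', Real.rpow_one]
  -- key pointwise claim
  have hkey : ∀ r : Fin n → ℝ, (∀ j, r j ∈ Icc (0:ℝ) 1) → ∏ j, r j ^ (2 * α j) ≤ ε →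
      ∃ j, r j ≤ δ := by
    intro r hb hp
    by_contra hc
    push_neg at hc
    have hlt : ε < ∏ j, r j ^ (2 * α j) := by
      have : ∏ j, δ ^ (2 * α j) < ∏ j, r j ^ (2 * α j) := by
        obtain ⟨j0, hj0⟩ := hn
        refine Finset.prod_lt_prod (fun i _ => by positivity)
          (fun i _ => pow_le_pow_left₀ hδ0.le (hc i).le _) ⟨j0, Finset.mem_univ j0, ?_⟩
        exact pow_lt_pow_left₀ (hc j0) hδ0.le (by positivity)
      calc ε = δ ^ (2*S) := hδpow.symm
        _ = ∏ j, δ ^ (2 * α j) := by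
            rw [Finset.prod_pow_eq_pow_sum]
            congr 1
            rw [hSdef, Finset.mul_sum]
        _ < _ := this
    exact absurd hp (not_le.mpr hlt)
  -- the covering sets
  set T : Fin n → Set (Fin n → ℝ) :=
    fun j => Set.pi Set.univ (fun k => if k = j then Icc (0:ℝ) δ else Icc (0:ℝ) 1) with hT
  have hsub : {r : Fin n → ℝ | (∀ j, r j ∈ Icc (0:ℝ) 1) ∧ ∏ j, r j ^ (2 * α j) ≤ ε}
      ⊆ ⋃ j, T j := by
    intro r ⟨hb, hp⟩
    obtain ⟨j, hj⟩ := hkey r hb hp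
    refine Set.mem_iUnion.mpr ⟨j, ?_⟩
    intro k _
    by_cases hk : k = j
    · simp only [hk, if_pos rfl]
      exact ⟨(hb j).1, hj⟩
    · simp only [if_neg hk]
      exact hb k
  have hTvol : ∀ j, volume (T j) ≤ ENNReal.ofReal δ := by
    intro j
    rw [hT, volume_pi_pi]
    have : ∏ k, volume (if k = j then Icc (0:ℝ) δ else Icc (0:ℝ) 1)
        ≤ ∏ k, (if k = j then ENNReal.ofReal δ else 1) := by
      refine Finset.prod_le_prod' fun k _ => ?_
      by_cases hk : k = j <;> simp [hk, Real.volume_Icc]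
    refine this.trans ?_
    rw [Finset.prod_ite_eq' Finset.univ j (fun _ => ENNReal.ofReal δ)]
    simp
  have hδω : δ ≤ ε ^ ω := by
    rw [hδdef]
    refine Real.rpow_le_rpow_of_exponent_ge hε0 hε1 (le_of_lt ?_)
    have hc : ((S:ℝ)) = ∑ j, (α j : ℝ) := by rw [hSdef]; push_cast; ring
    rw [one_div, hc]
    rwa [one_div] at hω
  calc volume {r : Fin n → ℝ | (∀ j, r j ∈ Icc (0:ℝ) 1) ∧ ∏ j, r j ^ (2 * α j) ≤ ε}
      ≤ volume (⋃ j, T j) := measure_mono hsub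
    _ ≤ ∑' j : Fin n, volume (T j) := measure_iUnion_le T
    _ ≤ ∑' _ : Fin n, ENNReal.ofReal δ := ENNReal.tsum_le_tsum hTvol
    _ = n * ENNReal.ofReal δ := by rw [tsum_fintype]; simp [Finset.card_univ, mul_comm]
    _ ≤ ENNReal.ofReal (n * ε ^ ω) := by
        rw [ENNReal.ofReal_mul (by positivity), ENNReal.ofReal_natCast]
        exact mul_le_mul_right (ENNReal.ofReal_le_ofReal hδω) _
end

section
/- Let α ∈ ℕⁿ be a nonzero multi-index. There exist constants C > 0 and ω > 0 (any ω < 1/(2|α|) works) such that for all ε ∈ (0,1], ∫_{{ r ∈ [0,1]ⁿ : r^{2α} ≥ ε }} ε / r^{2α} dr ≤ C·ε^ω, where r^{2α} = Π_j r_j^{2α_j}. -/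
/-!
On the region `ε ≤ P(r) := r^{2α}` we have `ε / P ≤ 1`, so for `ω ≤ 1`
`ε / P ≤ (ε / P)^ω = ε^ω · ∏ⱼ r_j^{-2α_j ω}`. The right-hand side is a product of one-variable
functions, integrable on `[0, 1]` precisely because `2α_j ω < 1`, and Fubini gives
`∫_{[0,1]ⁿ} ∏ⱼ r_j^{-2α_j ω} = ∏ⱼ (1 - 2α_j ω)⁻¹`.
-/

open MeasureTheory Set

section BoxProduct

variable {ι 𝕜 : Type*} [Fintype ι] [RCLike 𝕜] {E : ι → Type*} [∀ i, MeasurableSpace (E i)]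
  {μ : ∀ i, Measure (E i)} [∀ i, SigmaFinite (μ i)]

theorem integrableOn_univ_pi_prod {f : ∀ i, E i → 𝕜} {s : ∀ i, Set (E i)}
    (hf : ∀ i, IntegrableOn (f i) (s i) (μ i)) :
    IntegrableOn (fun x ↦ ∏ i, f i (x i)) (univ.pi s) (Measure.pi μ) := by
  rw [IntegrableOn, Measure.restrict_pi_pi]
  exact Integrable.fintype_prod_dep hf

theorem setIntegral_univ_pi_prod (f : ∀ i, E i → 𝕜) (s : ∀ i, Set (E i)) :
    ∫ x in univ.pi s, ∏ i, f i (x i) ∂Measure.pi μ = ∏ i, ∫ y in s i, f i y ∂μ i := by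
  rw [Measure.restrict_pi_pi, integral_fintype_prod_eq_prod]

end BoxProduct

theorem integrableOn_Icc_zero_one_rpow_neg {c : ℝ} (hc : c < 1) :
    IntegrableOn (fun x : ℝ ↦ x ^ (-c)) (Icc 0 1) := by
  rw [integrableOn_Icc_iff_integrableOn_Ioc,
    ← intervalIntegrable_iff_integrableOn_Ioc_of_le zero_le_one]
  exact intervalIntegral.intervalIntegrable_rpow' (by linarith)

theorem integral_Icc_zero_one_rpow_neg {c : ℝ} (hc : c < 1) :
    ∫ x in Icc (0 : ℝ) 1, x ^ (-c) = (1 - c)⁻¹ := by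
  rw [integral_Icc_eq_integral_Ioc, ← intervalIntegral.integral_of_le zero_le_one,
    integral_rpow (Or.inl (by linarith)), Real.one_rpow, Real.zero_rpow (by linarith)]
  ring

theorem div_le_rpow_mul_rpow_neg {ε p ω : ℝ} (hε : 0 < ε) (hεp : ε ≤ p) (hω : ω ≤ 1) :
    ε / p ≤ ε ^ ω * p ^ (-ω) := by
  have hp : 0 < p := hε.trans_le hεp
  calc ε / p ≤ (ε / p) ^ ω :=
        Real.self_le_rpow_of_le_one (div_nonneg hε.le hp.le) ((div_le_one hp).mpr hεp) hω
    _ = ε ^ ω * p ^ (-ω) := by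
      rw [Real.div_rpow hε.le hp.le, Real.rpow_neg hp.le, div_eq_mul_inv]

theorem finsetProd_pow_rpow {ι : Type*} (s : Finset ι) {r : ι → ℝ} (hr : ∀ i ∈ s, 0 ≤ r i)
    (k : ι → ℕ) (t : ℝ) : (∏ i ∈ s, r i ^ k i) ^ t = ∏ i ∈ s, r i ^ (k i * t) := by
  rw [← Real.finsetProd_rpow _ _ fun i hi ↦ pow_nonneg (hr i hi) _]
  refine Finset.prod_congr rfl fun i hi ↦ ?_
  rw [← Real.rpow_natCast, ← Real.rpow_mul (hr i hi)]

theorem setIntegral_div_prod_pow_le {ι : Type*} [Fintype ι] (k : ι → ℕ) {ω : ℝ} (hω : ω ≤ 1)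
    (hk : ∀ i, k i * ω < 1) {ε : ℝ} (hε : 0 < ε) :
    ∫ r in {r : ι → ℝ | (∀ i, r i ∈ Icc (0 : ℝ) 1) ∧ ε ≤ ∏ i, r i ^ k i}, ε / ∏ i, r i ^ k i
      ≤ (∏ i, (1 - k i * ω)⁻¹) * ε ^ ω := by
  have hs : MeasurableSet {r : ι → ℝ | (∀ i, r i ∈ Icc (0 : ℝ) 1) ∧ ε ≤ ∏ i, r i ^ k i} := by
    measurability
  set s := {r : ι → ℝ | (∀ i, r i ∈ Icc (0 : ℝ) 1) ∧ ε ≤ ∏ i, r i ^ k i}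
  have hcube : MeasurableSet (univ.pi fun _ : ι ↦ Icc (0 : ℝ) 1) :=
    .univ_pi fun _ ↦ measurableSet_Icc
  have hsub : s ⊆ univ.pi fun _ ↦ Icc 0 1 := fun r hr i _ ↦ hr.1 i
  set g := fun r : ι → ℝ ↦ ε ^ ω * ∏ i, r i ^ (-(k i * ω))
  have hg : IntegrableOn g (univ.pi fun _ ↦ Icc 0 1) :=
    (integrableOn_univ_pi_prod fun i ↦ integrableOn_Icc_zero_one_rpow_neg (hk i)).const_mul _
  have hg_nonneg : ∀ r ∈ univ.pi fun _ : ι ↦ Icc (0 : ℝ) 1, 0 ≤ g r := fun r hr ↦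
    mul_nonneg (by positivity) (Finset.prod_nonneg fun i _ ↦ Real.rpow_nonneg (hr i trivial).1 _)
  have hle_g : ∀ r ∈ s, ε / ∏ i, r i ^ k i ≤ g r := fun r hr ↦ by
    have h := div_le_rpow_mul_rpow_neg hε hr.2 hω
    rw [finsetProd_pow_rpow _ fun i _ ↦ (hr.1 i).1] at h
    simpa only [mul_neg] using h
  calc ∫ r in s, ε / ∏ i, r i ^ k i ≤ ∫ r in s, g r :=
        integral_mono_of_nonneg
          (ae_restrict_of_forall_mem hs fun r hr ↦ div_nonneg hε.le (hε.le.trans hr.2))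
          (hg.mono_set hsub) (ae_restrict_of_forall_mem hs hle_g)
    _ ≤ ∫ r in univ.pi fun _ ↦ Icc 0 1, g r :=
        setIntegral_mono_set hg (ae_restrict_of_forall_mem hcube hg_nonneg) hsub.eventuallyLE
    _ = (∏ i, (1 - k i * ω)⁻¹) * ε ^ ω := by
        rw [integral_const_mul, volume_pi, setIntegral_univ_pi_prod (μ := fun _ ↦ volume)
          (fun i x ↦ x ^ (-(k i * ω))) (fun _ ↦ Icc 0 1), mul_comm]
        simp_rw [integral_Icc_zero_one_rpow_neg (hk _)]

theorem stmt4_general (n : ℕ) (α : Fin n → ℕ)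
    (ω : ℝ) (hω0 : 0 < ω) (hω : ω < 1 / (2 * (∑ j, α j : ℝ))) :
    ∃ C : ℝ, 0 < C ∧ ∀ ε : ℝ, ε ∈ Ioc (0:ℝ) 1 →
      ∫ r in {r : Fin n → ℝ | (∀ j, r j ∈ Icc (0:ℝ) 1) ∧ ε ≤ ∏ j, r j ^ (2 * α j)},
          ε / ∏ j, r j ^ (2 * α j) ≤ C * ε ^ ω := by
  have hS : 0 < 2 * ∑ j, (α j : ℝ) := one_div_pos.mp (hω0.trans hω)
  have hS1 : 1 ≤ ∑ j, (α j : ℝ) := by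
    have h : 0 < ∑ j, α j := by exact_mod_cast (by linarith : 0 < ∑ j, (α j : ℝ))
    exact_mod_cast h
  have hωS : 2 * (∑ j, (α j : ℝ)) * ω < 1 := by rwa [lt_div_iff₀ hS, mul_comm] at hω
  have hk : ∀ j, ((2 * α j : ℕ) : ℝ) * ω < 1 := fun j ↦ by
    have hαj : (α j : ℝ) ≤ ∑ i, (α i : ℝ) :=
      Finset.single_le_sum (fun i _ ↦ Nat.cast_nonneg (α i)) (Finset.mem_univ j)
    push_cast
    nlinarith
  have hω1 : ω ≤ 1 := by nlinarith
  refine ⟨∏ j, (1 - ((2 * α j : ℕ) : ℝ) * ω)⁻¹,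
    Finset.prod_pos fun j _ ↦ inv_pos.mpr (sub_pos.mpr (hk j)), fun ε hε ↦ ?_⟩
  exact setIntegral_div_prod_pow_le (fun j ↦ 2 * α j) hω1 hk hε.1

/-- For a nonzero multi-index `α ∈ ℕⁿ` and any `0 < ω < 1/(2|α|)` there is `C > 0`
such that `∫_{ r ∈ [0,1]ⁿ : r^{2α} ≥ ε } ε / r^{2α} dr ≤ C ε^ω` for all `ε ∈ (0,1]`. -/
theorem stmt4 (n : ℕ) (α : Fin n → ℕ) (hα : α ≠ 0)
    (ω : ℝ) (hω0 : 0 < ω) (hω : ω < 1 / (2 * (∑ j, α j : ℝ))) :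
    ∃ C : ℝ, 0 < C ∧ ∀ ε : ℝ, ε ∈ Ioc (0:ℝ) 1 →
      ∫ r in {r : Fin n → ℝ | (∀ j, r j ∈ Icc (0:ℝ) 1) ∧ ε ≤ ∏ j, r j ^ (2 * α j)},
          ε / ∏ j, r j ^ (2 * α j) ≤ C * ε ^ ω :=
  stmt4_general n α ω hω0 hω
end

section
/- Let φ : ℂ → ℂ be compactly supported and Lipschitz continuous. Then there exist constants C > 0 and ω > 0 such that for all ε ∈ (0,1], | ∫_ℂ ε/(|z|²+ε)² φ(z) dλ(z) − π φ(0) | ≤ C ε^ω. In particular one may take ω = 1/2. -/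
/-!
The kernel `ε / (|z|² + ε)²` has total mass `π`, so the error is
`∫ ε / (|z|² + ε)² (φ z - φ 0)`, whose integrand is at most `K |z| ε / (|z|² + ε)²`. Since
`|z| ≤ √(|z|² + ε)`, this is dominated by `K ε (|z|² + ε)^(-3/2)`, of integral `2πK√ε`. Both
integrals are computed in polar coordinates from explicit primitives of the radial profiles.
-/

open MeasureTheory Set Filter Topology

theorem integrable_comp_norm_complex_iff {f : ℝ → ℝ} :
    Integrable (fun z : ℂ => f ‖z‖) ↔ IntegrableOn (fun y => y * f y) (Ioi 0) := by
  simpa using integrable_fun_norm_addHaar (volume : Measure ℂ) (f := f)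

theorem integral_comp_norm_complex (f : ℝ → ℝ) :
    ∫ z : ℂ, f ‖z‖ = 2 * Real.pi * ∫ y in Ioi (0 : ℝ), y * f y := by
  rw [integral_fun_norm_addHaar volume f]
  simp [Measure.real, Complex.volume_ball]
  ring

section RadialPrimitive

variable {f F : ℝ → ℝ} {l : ℝ}

theorem integrable_comp_norm_complex_of_hasDerivAt
    (hF : ∀ y ∈ Ici (0 : ℝ), HasDerivAt F (y * f y) y) (hf : ∀ y ∈ Ioi (0 : ℝ), 0 ≤ y * f y)
    (hl : Tendsto F atTop (𝓝 l)) :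
    Integrable (fun z : ℂ => f ‖z‖) :=
  integrable_comp_norm_complex_iff.2 (integrableOn_Ioi_deriv_of_nonneg' hF hf hl)

theorem integral_comp_norm_complex_of_hasDerivAt
    (hF : ∀ y ∈ Ici (0 : ℝ), HasDerivAt F (y * f y) y) (hf : ∀ y ∈ Ioi (0 : ℝ), 0 ≤ y * f y)
    (hl : Tendsto F atTop (𝓝 l)) :
    ∫ z : ℂ, f ‖z‖ = 2 * Real.pi * (l - F 0) := by
  rw [integral_comp_norm_complex, integral_Ioi_of_hasDerivAt_of_nonneg' hF hf hl]

end RadialPrimitive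

noncomputable def residueKernel (ε t : ℝ) : ℝ := ε / (t ^ 2 + ε) ^ 2

noncomputable def residueMajorant (ε t : ℝ) : ℝ := ε / ((t ^ 2 + ε) * √(t ^ 2 + ε))

section Kernels

variable {ε : ℝ}

theorem tendsto_sq_add_const_atTop (ε : ℝ) : Tendsto (fun y : ℝ => y ^ 2 + ε) atTop atTop :=
  tendsto_atTop_add_const_right _ ε (tendsto_pow_atTop two_ne_zero)

theorem mul_residueKernel_nonneg (hε : 0 < ε) {y : ℝ} (hy : y ∈ Ioi 0) :
    0 ≤ y * residueKernel ε y := by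
  have : 0 < y := hy
  unfold residueKernel
  positivity

theorem mul_residueMajorant_nonneg (hε : 0 < ε) {y : ℝ} (hy : y ∈ Ioi 0) :
    0 ≤ y * residueMajorant ε y := by
  have : 0 < y := hy
  unfold residueMajorant
  positivity

theorem hasDerivAt_residueKernel_primitive (hε : 0 < ε) (y : ℝ) :
    HasDerivAt (fun y : ℝ => -ε / 2 * (y ^ 2 + ε)⁻¹) (y * residueKernel ε y) y := by
  have h := (((hasDerivAt_pow 2 y).add_const ε).inv (by positivity)).const_mul (-ε / 2)
  refine h.congr_deriv ?_
  unfold residueKernel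
  field_simp
  ring

theorem tendsto_residueKernel_primitive (ε : ℝ) :
    Tendsto (fun y : ℝ => -ε / 2 * (y ^ 2 + ε)⁻¹) atTop (𝓝 0) := by
  simpa using ((tendsto_sq_add_const_atTop ε).inv_tendsto_atTop).const_mul (-ε / 2)

theorem hasDerivAt_residueMajorant_primitive (hε : 0 < ε) (y : ℝ) :
    HasDerivAt (fun y : ℝ => -ε / √(y ^ 2 + ε)) (y * residueMajorant ε y) y := by
  have hpos : 0 < y ^ 2 + ε := by positivity
  have h := ((((hasDerivAt_pow 2 y).add_const ε).sqrt hpos.ne').inv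
    (Real.sqrt_pos.2 hpos).ne').const_mul (-ε)
  simp only [div_eq_mul_inv]
  refine h.congr_deriv ?_
  rw [residueMajorant, Real.sq_sqrt hpos.le]
  field_simp
  ring

theorem tendsto_residueMajorant_primitive (ε : ℝ) :
    Tendsto (fun y : ℝ => -ε / √(y ^ 2 + ε)) atTop (𝓝 0) := by
  simpa using (Real.tendsto_sqrt_atTop.comp (tendsto_sq_add_const_atTop ε)).const_div_atTop (-ε)

theorem integrable_residueKernel (hε : 0 < ε) : Integrable (fun z : ℂ => residueKernel ε ‖z‖) :=
  integrable_comp_norm_complex_of_hasDerivAt (fun y _ => hasDerivAt_residueKernel_primitive hε y)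
    (fun _ => mul_residueKernel_nonneg hε) (tendsto_residueKernel_primitive ε)

theorem integral_residueKernel (hε : 0 < ε) : ∫ z : ℂ, residueKernel ε ‖z‖ = Real.pi := by
  rw [integral_comp_norm_complex_of_hasDerivAt
    (fun y _ => hasDerivAt_residueKernel_primitive hε y) (fun _ => mul_residueKernel_nonneg hε)
    (tendsto_residueKernel_primitive ε)]
  field_simp
  ring

theorem integrable_residueMajorant (hε : 0 < ε) :
    Integrable (fun z : ℂ => residueMajorant ε ‖z‖) :=
  integrable_comp_norm_complex_of_hasDerivAt (fun y _ => hasDerivAt_residueMajorant_primitive hε y)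
    (fun _ => mul_residueMajorant_nonneg hε) (tendsto_residueMajorant_primitive ε)

theorem integral_residueMajorant (hε : 0 < ε) :
    ∫ z : ℂ, residueMajorant ε ‖z‖ = 2 * Real.pi * √ε := by
  rw [integral_comp_norm_complex_of_hasDerivAt
    (fun y _ => hasDerivAt_residueMajorant_primitive hε y) (fun _ => mul_residueMajorant_nonneg hε)
    (tendsto_residueMajorant_primitive ε)]
  simp [neg_div, Real.div_sqrt]

theorem residueKernel_mul_le_residueMajorant (hε : 0 < ε) (t : ℝ) :
    residueKernel ε t * t ≤ residueMajorant ε t := by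
  have hpos : 0 < t ^ 2 + ε := by positivity
  have hsqrt : 0 < √(t ^ 2 + ε) := Real.sqrt_pos.2 hpos
  calc residueKernel ε t * t ≤ ε / (t ^ 2 + ε) ^ 2 * √(t ^ 2 + ε) := by
        unfold residueKernel
        gcongr
        exact Real.le_sqrt_of_sq_le (by linarith)
    _ = residueMajorant ε t := by
      unfold residueMajorant
      field_simp
      exact Real.sq_sqrt hpos.le

theorem norm_integral_residueKernel_smul_sub_le {E : Type*} [NormedAddCommGroup E]
    [NormedSpace ℝ E] [CompleteSpace E] {φ : ℂ → E} {K : NNReal} (hφ : LipschitzWith K φ)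
    (hε : 0 < ε) :
    ‖(∫ z : ℂ, residueKernel ε ‖z‖ • φ z) - Real.pi • φ 0‖ ≤ 2 * Real.pi * K * √ε := by
  have hbound : ∀ z : ℂ, ‖residueKernel ε ‖z‖ • (φ z - φ 0)‖ ≤ K * residueMajorant ε ‖z‖ := by
    intro z
    have hlip : ‖φ z - φ 0‖ ≤ K * ‖z‖ := by
      simpa [dist_eq_norm] using hφ.dist_le_mul z 0
    have hk : 0 ≤ residueKernel ε ‖z‖ := by unfold residueKernel; positivity
    calc ‖residueKernel ε ‖z‖ • (φ z - φ 0)‖ ≤ residueKernel ε ‖z‖ * (K * ‖z‖) := by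
          rw [norm_smul, Real.norm_of_nonneg hk]
          gcongr
      _ = K * (residueKernel ε ‖z‖ * ‖z‖) := by ring
      _ ≤ K * residueMajorant ε ‖z‖ := by
          gcongr
          exact residueKernel_mul_le_residueMajorant hε _
  have hkernel := integrable_residueKernel hε
  have hdiff : Integrable (fun z : ℂ => residueKernel ε ‖z‖ • (φ z - φ 0)) :=
    ((integrable_residueMajorant hε).const_mul K).mono'
      (hkernel.aestronglyMeasurable.smul (hφ.continuous.sub continuous_const).aestronglyMeasurable)
      (ae_of_all _ hbound)
  have hsplit : (∫ z : ℂ, residueKernel ε ‖z‖ • φ z) - Real.pi • φ 0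
      = ∫ z : ℂ, residueKernel ε ‖z‖ • (φ z - φ 0) := by
    rw [← integral_residueKernel hε, ← integral_smul_const,
      ← integral_sub _ (hkernel.smul_const _)]
    · simp only [smul_sub]
    · simpa only [Pi.add_def, ← smul_add, sub_add_cancel] using
        hdiff.add (hkernel.smul_const (φ 0))
  calc _ = ‖∫ z : ℂ, residueKernel ε ‖z‖ • (φ z - φ 0)‖ := by rw [hsplit]
    _ ≤ ∫ z : ℂ, K * residueMajorant ε ‖z‖ :=
      norm_integral_le_of_norm_le ((integrable_residueMajorant hε).const_mul K)
        (ae_of_all _ hbound)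
    _ = 2 * Real.pi * K * √ε := by
      rw [integral_const_mul, integral_residueMajorant hε]
      ring

end Kernels

theorem stmt6_general (φ : ℂ → ℂ) (K : NNReal)
    (hlip : LipschitzWith K φ) :
    ∃ C : ℝ, 0 < C ∧ ∀ ε : ℝ, ε ∈ Ioc (0:ℝ) 1 →
      ‖(∫ z : ℂ, (ε / (‖z‖ ^ 2 + ε) ^ 2 : ℝ) • φ z) - (Real.pi : ℝ) • φ 0‖
        ≤ C * ε ^ (1/2 : ℝ) := by
  refine ⟨2 * Real.pi * K + 1, by positivity, fun ε ⟨hε, _⟩ => ?_⟩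
  calc _ ≤ 2 * Real.pi * K * √ε := norm_integral_residueKernel_smul_sub_le hlip hε
    _ ≤ (2 * Real.pi * K + 1) * ε ^ (1/2 : ℝ) := by
      rw [Real.sqrt_eq_rpow]
      gcongr
      linarith

/-- For compactly supported Lipschitz `φ : ℂ → ℂ` there is `C > 0` with
`| ∫ ε/(|z|²+ε)² φ dλ − π φ(0) | ≤ C ε^{1/2}` for all `ε ∈ (0,1]`; in particular
the exponent `ω = 1/2` works. -/
theorem stmt6 (φ : ℂ → ℂ) (hsupp : HasCompactSupport φ) (K : NNReal)
    (hlip : LipschitzWith K φ) :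
    ∃ C : ℝ, 0 < C ∧ ∀ ε : ℝ, ε ∈ Ioc (0:ℝ) 1 →
      ‖(∫ z : ℂ, (ε / (‖z‖ ^ 2 + ε) ^ 2 : ℝ) • φ z) - (Real.pi : ℝ) • φ 0‖
        ≤ C * ε ^ (1/2 : ℝ) :=
  stmt6_general φ K hlip
end

section
/- Let χ : [0,∞) → [0,1] be a smooth nondecreasing function with χ ≡ 0 near 0 and χ ≡ 1 near ∞, and let φ : ℂ → ℂ be smooth with compact support and k ≥ 1. Then there exist C > 0 and ω > 0 such that for all ε₁, ε₂ ∈ (0,1], | ∫_ℂ χ(|z|²/ε₁) χ(|z|⁴/ε₂) φ(z)/z^k dλ(z) − ∫_ℂ χ(|z|²/ε₁) φ(z)/z^k dλ(z) | ≤ C ε₂^ω, uniformly in ε₁. -/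
open MeasureTheory Set


/-- Span of monomials `z ^ a * conj z ^ b` with `a + b ≤ n`. -/
noncomputable def stmt17Mspan (n : ℕ) : Submodule ℂ (ℂ → ℂ) :=
  Submodule.span ℂ {g | ∃ a b : ℕ, a + b ≤ n ∧ g = fun z => z ^ a * (starRingEnd ℂ) z ^ b}

lemma stmt17Mspan_mono {n m : ℕ} (h : n ≤ m) : stmt17Mspan n ≤ stmt17Mspan m := by
  apply Submodule.span_mono
  rintro g ⟨a, b, hab, rfl⟩
  exact ⟨a, b, hab.trans h, rfl⟩

lemma stmt17Mspan_mul_z {n : ℕ} {g : ℂ → ℂ} (hg : g ∈ stmt17Mspan n) :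
    (fun z => z * g z) ∈ stmt17Mspan (n + 1) := by
  induction hg using Submodule.span_induction with
  | mem x hx =>
    obtain ⟨a, b, hab, rfl⟩ := hx
    exact Submodule.subset_span ⟨a + 1, b, by omega, by funext z; ring⟩
  | zero =>
    have : (fun z : ℂ => z * (0 : ℂ → ℂ) z) = (0 : ℂ → ℂ) := by funext z; simp
    rw [this]; exact zero_mem _
  | add x y hx hy ihx ihy =>
    have : (fun z => z * (x + y) z) = (fun z => z * x z) + fun z => z * y z := by
      funext z; simp [mul_add]
    rw [this]; exact add_mem ihx ihy
  | smul a x hx ih =>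
    have : (fun z => z * (a • x) z) = a • fun z => z * x z := by
      funext z; simp [smul_eq_mul]; ring
    rw [this]; exact Submodule.smul_mem _ _ ih

lemma stmt17Mspan_mul_conj {n : ℕ} {g : ℂ → ℂ} (hg : g ∈ stmt17Mspan n) :
    (fun z => (starRingEnd ℂ) z * g z) ∈ stmt17Mspan (n + 1) := by
  induction hg using Submodule.span_induction with
  | mem x hx =>
    obtain ⟨a, b, hab, rfl⟩ := hx
    exact Submodule.subset_span ⟨a, b + 1, by omega, by funext z; ring⟩
  | zero =>
    have : (fun z : ℂ => (starRingEnd ℂ) z * (0 : ℂ → ℂ) z) = (0 : ℂ → ℂ) := by funext z; simp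
    rw [this]; exact zero_mem _
  | add x y hx hy ihx ihy =>
    have : (fun z => (starRingEnd ℂ) z * (x + y) z)
        = (fun z => (starRingEnd ℂ) z * x z) + fun z => (starRingEnd ℂ) z * y z := by
      funext z; simp [mul_add]
    rw [this]; exact add_mem ihx ihy
  | smul a x hx ih =>
    have : (fun z => (starRingEnd ℂ) z * (a • x) z) = a • fun z => (starRingEnd ℂ) z * x z := by
      funext z; simp [smul_eq_mul]; ring
    rw [this]; exact Submodule.smul_mem _ _ ih

lemma stmt17Mspan_powA (p : ℕ) :
    (fun z : ℂ => (z + (starRingEnd ℂ) z) ^ p) ∈ stmt17Mspan p := by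
  induction p with
  | zero => exact Submodule.subset_span ⟨0, 0, le_refl 0, by funext z; simp⟩
  | succ p ih =>
    have h1 := stmt17Mspan_mul_z ih
    have h2 := stmt17Mspan_mul_conj ih
    have : (fun z : ℂ => (z + (starRingEnd ℂ) z) ^ (p + 1))
        = (fun z : ℂ => z * (z + (starRingEnd ℂ) z) ^ p)
          + fun z : ℂ => (starRingEnd ℂ) z * (z + (starRingEnd ℂ) z) ^ p := by
      funext z; simp [pow_succ]; ring
    rw [this]; exact add_mem h1 h2

lemma stmt17Mspan_pow (p q : ℕ) :
    (fun z : ℂ => (z + (starRingEnd ℂ) z) ^ p * (z - (starRingEnd ℂ) z) ^ q)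
      ∈ stmt17Mspan (p + q) := by
  induction q with
  | zero =>
    have : (fun z : ℂ => (z + (starRingEnd ℂ) z) ^ p * (z - (starRingEnd ℂ) z) ^ 0)
        = fun z : ℂ => (z + (starRingEnd ℂ) z) ^ p := by funext z; simp
    rw [this]; exact stmt17Mspan_powA p
  | succ q ih =>
    have h1 := stmt17Mspan_mul_z ih
    have h2 := stmt17Mspan_mul_conj ih
    have : (fun z : ℂ => (z + (starRingEnd ℂ) z) ^ p * (z - (starRingEnd ℂ) z) ^ (q + 1))
        = (fun z : ℂ => z * ((z + (starRingEnd ℂ) z) ^ p * (z - (starRingEnd ℂ) z) ^ q))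
          - fun z : ℂ =>
            (starRingEnd ℂ) z * ((z + (starRingEnd ℂ) z) ^ p * (z - (starRingEnd ℂ) z) ^ q) := by
      funext z; simp [pow_succ]; ring
    rw [this]; exact sub_mem h1 h2
lemma stmt17_expand (j : ℕ) (L : ContinuousMultilinearMap ℝ (fun _ : Fin j => ℂ) ℂ) :
    (fun z => L fun _ => z) ∈ stmt17Mspan j := by
  classical
  have key : ∀ z : ℂ, L (fun _ => z) = ∑ s : Finset (Fin j),
      (z.re ^ s.card * z.im ^ (j - s.card)) •
        L (s.piecewise (fun _ => (1 : ℂ)) fun _ => Complex.I) := by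
    intro z
    have hz : (fun _ : Fin j => z)
        = (fun _ : Fin j => z.re • (1 : ℂ)) + fun _ : Fin j => z.im • Complex.I := by
      funext i
      show z = z.re • (1 : ℂ) + z.im • Complex.I
      rw [Complex.real_smul, Complex.real_smul, mul_one, Complex.re_add_im]
    rw [hz, L.map_add_univ]
    refine Finset.sum_congr rfl fun s _ => ?_
    have hpiece : (s.piecewise (fun _ : Fin j => z.re • (1 : ℂ)) fun _ => z.im • Complex.I)
        = fun i => (if i ∈ s then z.re else z.im) •
            (s.piecewise (fun _ : Fin j => (1 : ℂ)) fun _ => Complex.I) i := by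
      funext i
      by_cases h : i ∈ s <;> simp [Finset.piecewise, h]
    rw [hpiece, L.map_smul_univ]
    congr 1
    rw [← Finset.prod_sdiff (Finset.subset_univ s)]
    have h1 : ∏ i ∈ s, (if i ∈ s then z.re else z.im) = z.re ^ s.card := by
      rw [Finset.prod_congr rfl fun i hi => if_pos hi, Finset.prod_const]
    have h2 : ∏ i ∈ Finset.univ \ s, (if i ∈ s then z.re else z.im) = z.im ^ (j - s.card) := by
      rw [Finset.prod_congr rfl fun i hi => if_neg (Finset.mem_sdiff.mp hi).2, Finset.prod_const,
        Finset.card_sdiff_of_subset (Finset.subset_univ s), Finset.card_univ, Fintype.card_fin]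
    rw [h1, h2, mul_comm]
  have hfun : (fun z : ℂ => L fun _ => z) = ∑ s : Finset (Fin j), fun z : ℂ =>
      (z.re ^ s.card * z.im ^ (j - s.card)) •
        L (s.piecewise (fun _ => (1 : ℂ)) fun _ => Complex.I) := by
    funext z; rw [key z]; simp
  rw [hfun]
  refine Submodule.sum_mem _ fun s _ => ?_
  have hcard : s.card ≤ j := by
    simpa using Finset.card_le_card (Finset.subset_univ s)
  have hterm : (fun z : ℂ => (z.re ^ s.card * z.im ^ (j - s.card)) •
        L (s.piecewise (fun _ => (1 : ℂ)) fun _ => Complex.I))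
      = (((2 : ℂ) ^ s.card * ((2 : ℂ) * Complex.I) ^ (j - s.card))⁻¹ *
          L (s.piecewise (fun _ => (1 : ℂ)) fun _ => Complex.I)) •
        fun z : ℂ => (z + (starRingEnd ℂ) z) ^ s.card
          * (z - (starRingEnd ℂ) z) ^ (j - s.card) := by
    funext z
    have h1 : z + (starRingEnd ℂ) z = (2 : ℂ) * z.re := by
      rw [Complex.add_conj]; push_cast; ring
    have h2 : z - (starRingEnd ℂ) z = ((2 : ℂ) * z.im) * Complex.I := by
      rw [Complex.sub_conj]; push_cast; ring
    simp only [Pi.smul_apply, smul_eq_mul, Complex.real_smul]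
    rw [h1, h2]
    have h2I : ((2 : ℂ) * Complex.I) ≠ 0 := by simp [Complex.I_ne_zero]
    push_cast
    rw [mul_pow, mul_pow]
    field_simp
    ring
  rw [hterm]
  have := stmt17Mspan_pow s.card (j - s.card)
  have hj : s.card + (j - s.card) = j := by omega
  rw [hj] at this
  exact Submodule.smul_mem _ _ this
lemma stmt17_taylor (φ : ℂ → ℂ) (hφ : ContDiff ℝ (⊤ : ℕ∞) φ) (hsupp : HasCompactSupport φ)
    (k : ℕ) (hk : 1 ≤ k) :
    ∃ (P : ℂ → ℂ) (M : ℝ), P ∈ stmt17Mspan (k - 1) ∧ 0 < M ∧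
      ∀ z : ℂ, ‖φ z - P z‖ ≤ M * ‖z‖ ^ k := by
  obtain ⟨n, rfl⟩ : ∃ n, k = n + 1 := ⟨k - 1, by omega⟩
  -- global bound for the k-th derivative
  obtain ⟨K, hK⟩ := Continuous.bounded_above_of_compact_support
    ((hφ.continuous_iteratedFDeriv ((by exact_mod_cast le_top))).norm) ((hsupp.iteratedFDeriv (n + 1)).norm)
  simp only [norm_norm] at hK
  have hK0 : 0 ≤ K := le_trans (norm_nonneg _) (hK 0)
  set P : ℂ → ℂ := fun z => ∑ j ∈ Finset.range (n + 1),
    ((Nat.factorial j : ℝ))⁻¹ • iteratedFDeriv ℝ j φ 0 (fun _ => z) with hP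
  refine ⟨P, K * ((Nat.factorial n : ℝ))⁻¹ + 1, ?_, by positivity, ?_⟩
  · -- membership in the span
    have : P = ∑ j ∈ Finset.range (n + 1),
        (((Nat.factorial j : ℝ) : ℂ))⁻¹ • fun z : ℂ => iteratedFDeriv ℝ j φ 0 (fun _ => z) := by
      funext z
      simp only [hP, Finset.sum_apply, Pi.smul_apply]
      refine Finset.sum_congr rfl fun j _ => ?_
      rw [Complex.real_smul, smul_eq_mul]
      push_cast
      ring
    rw [this]
    simp only [Nat.add_sub_cancel]
    refine Submodule.sum_mem _ fun j hj => ?_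
    refine Submodule.smul_mem _ _ (stmt17Mspan_mono ?_ (stmt17_expand j _))
    exact Nat.lt_succ_iff.mp (Finset.mem_range.mp hj)
  · intro z
    -- Taylor's theorem along the segment t ↦ t • z
    set Lz : ℝ →L[ℝ] ℂ := ContinuousLinearMap.smulRight (ContinuousLinearMap.id ℝ ℝ) z with hLz
    have hLzap : ∀ t : ℝ, Lz t = t • z := fun t => rfl
    set g : ℝ → ℂ := φ ∘ Lz with hg'
    have hg : ContDiff ℝ (⊤ : ℕ∞) g := hφ.comp Lz.contDiff
    have hder : ∀ (j : ℕ) (t : ℝ), iteratedDeriv j g t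
        = iteratedFDeriv ℝ j φ (t • z) (fun _ => z) := by
      intro j t
      rw [iteratedDeriv_eq_iteratedFDeriv, hg',
        Lz.iteratedFDeriv_comp_right hφ t ((by exact_mod_cast le_top))]
      simp [ContinuousMultilinearMap.compContinuousLinearMap_apply, hLzap, one_smul]
    have hwithin : ∀ (j : ℕ) (t : ℝ), t ∈ Icc (0:ℝ) 1 →
        iteratedDerivWithin j g (Icc 0 1) t = iteratedDeriv j g t := by
      intro j t ht
      have h0 : HasFTaylorSeriesUpTo ((⊤:ℕ∞) : WithTop ℕ∞) g (ftaylorSeries ℝ g) :=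
        contDiff_iff_ftaylorSeries.mp (hg.of_le (by simp))
      have h1 := (h0.hasFTaylorSeriesUpToOn (Icc (0:ℝ) 1)).eq_iteratedFDerivWithin_of_uniqueDiffOn
        (m := j) (by exact_mod_cast le_top) (uniqueDiffOn_Icc one_pos) ht
      rw [iteratedDerivWithin_eq_iteratedFDerivWithin, ← h1, iteratedDeriv_eq_iteratedFDeriv]
      rfl
    have hC : ∀ y ∈ Icc (0:ℝ) 1,
        ‖iteratedDerivWithin (n + 1) g (Icc 0 1) y‖ ≤ K * ‖z‖ ^ (n + 1) := by
      intro y hy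
      rw [hwithin _ _ hy, hder]
      calc ‖iteratedFDeriv ℝ (n+1) φ (y • z) (fun _ => z)‖
          ≤ ‖iteratedFDeriv ℝ (n+1) φ (y • z)‖ * ∏ _i : Fin (n+1), ‖z‖ :=
            ContinuousMultilinearMap.le_opNorm _ _
        _ ≤ K * ‖z‖ ^ (n + 1) := by
            rw [Finset.prod_const, Finset.card_univ, Fintype.card_fin]
            exact mul_le_mul_of_nonneg_right (hK _) (by positivity)
    have hbound := taylor_mean_remainder_bound (by norm_num : (0:ℝ) ≤ 1)
      ((hg.of_le (by exact_mod_cast le_top)).contDiffOn) (show (1:ℝ) ∈ Icc (0:ℝ) 1 by rw [Set.mem_Icc]; constructor <;> norm_num) hC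
    have hg1 : g 1 = φ z := by simp [hg', Function.comp, hLzap]
    have htay : taylorWithinEval g n (Icc 0 1) 0 1 = P z := by
      rw [taylor_within_apply, hP]
      refine Finset.sum_congr rfl fun j hj => ?_
      rw [hwithin j 0 (show (0:ℝ) ∈ Icc (0:ℝ) 1 by rw [Set.mem_Icc]; constructor <;> norm_num), hder]
      simp
    rw [hg1, htay] at hbound
    calc ‖φ z - P z‖ ≤ K * ‖z‖ ^ (n + 1) * (1 - 0) ^ (n + 1) / (Nat.factorial n) := hbound
      _ = (K * ((Nat.factorial n : ℝ))⁻¹) * ‖z‖ ^ (n + 1) := by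
          rw [sub_zero, one_pow, mul_one, div_eq_mul_inv]; ring
      _ ≤ (K * ((Nat.factorial n : ℝ))⁻¹ + 1) * ‖z‖ ^ (n + 1) := by
          have : (0:ℝ) ≤ ‖z‖ ^ (n + 1) := by positivity
          nlinarith
lemma stmt17_cont {χ : ℝ → ℝ} (hχc : Continuous χ) {δ : ℝ} (hδ : 0 < δ)
    (hδ0 : ∀ t : ℝ, 0 ≤ t → t < δ → χ t = 0) {ε₁ : ℝ} (hε₁ : 0 < ε₁)
    (u : ℂ → ℂ) (hu : Continuous u) (k : ℕ) :
    Continuous fun z => (χ (‖z‖ ^ 2 / ε₁) : ℂ) * (u z / z ^ k) := by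
  rw [continuous_iff_continuousAt]
  intro z₀
  rcases eq_or_ne z₀ 0 with rfl | hz₀
  · have hev : ∀ᶠ z in nhds (0:ℂ), (0:ℂ) = (χ (‖z‖ ^ 2 / ε₁) : ℂ) * (u z / z ^ k) := by
      have hb : Metric.ball (0:ℂ) (Real.sqrt (δ * ε₁)) ∈ nhds (0:ℂ) :=
        Metric.ball_mem_nhds _ (Real.sqrt_pos.mpr (by positivity))
      filter_upwards [hb] with z hz
      have hzb : ‖z‖ < Real.sqrt (δ * ε₁) := by
        simpa [Complex.dist_eq] using hz
      have h2 : ‖z‖ ^ 2 < δ * ε₁ := by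
        have hs := Real.sq_sqrt (by positivity : (0:ℝ) ≤ δ * ε₁)
        nlinarith [norm_nonneg z, Real.sqrt_nonneg (δ * ε₁)]
      have h3 : ‖z‖ ^ 2 / ε₁ < δ := by rw [div_lt_iff₀ hε₁]; linarith
      rw [hδ0 _ (by positivity) h3]
      simp
    exact ContinuousAt.congr continuousAt_const hev
  · apply ContinuousAt.mul
    · exact (Complex.continuous_ofReal.comp
        (hχc.comp ((continuous_norm.pow 2).div_const ε₁))).continuousAt
    · exact (hu.continuousAt).div ((continuous_pow k).continuousAt) (pow_ne_zero _ hz₀)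

lemma stmt17_rot_zero {f : ℂ → ℂ} {ρ : Circle} {c : ℂ} (hc : c ≠ 1)
    (hf : ∀ z : ℂ, f ((ρ : ℂ) * z) = c * f z) : ∫ z : ℂ, f z = 0 := by
  have hmp := ((rotation ρ).measurePreserving).integral_comp
    (rotation ρ).toHomeomorph.measurableEmbedding f
  simp only [rotation_apply] at hmp
  simp only [hf] at hmp
  rw [integral_const_mul] at hmp
  by_contra h
  have : c * ∫ (z : ℂ), f z = 1 * ∫ (z : ℂ), f z := by rw [hmp, one_mul]
  exact hc (mul_right_cancel₀ h this)
/-- One-variable instance of the key proposition: inserting an extra cut-off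
`χ(|z|⁴/ε₂)` into the regularized principal value integral changes it by
`O(ε₂^ω)` uniformly in `ε₁`. -/
theorem stmt17 (χ : ℝ → ℝ) (hχ : ContDiff ℝ (⊤ : ℕ∞) χ) (hmono : Monotone χ)
    (hrange : ∀ t, χ t ∈ Icc (0:ℝ) 1)
    (h0 : ∃ δ > (0:ℝ), ∀ t : ℝ, 0 ≤ t → t < δ → χ t = 0)
    (h1 : ∃ T : ℝ, ∀ t : ℝ, T ≤ t → χ t = 1)
    (φ : ℂ → ℂ) (hφ : ContDiff ℝ (⊤ : ℕ∞) φ) (hsupp : HasCompactSupport φ)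
    (k : ℕ) (hk : 1 ≤ k) :
    ∃ C > (0:ℝ), ∃ ω > (0:ℝ), ∀ ε₁ ∈ Ioc (0:ℝ) 1, ∀ ε₂ ∈ Ioc (0:ℝ) 1,
      ‖(∫ z : ℂ, (χ (‖z‖ ^ 2 / ε₁) : ℂ) * (χ (‖z‖ ^ 4 / ε₂) : ℂ)
            * (φ z / z ^ k))
        - ∫ z : ℂ, (χ (‖z‖ ^ 2 / ε₁) : ℂ) * (φ z / z ^ k)‖
        ≤ C * ε₂ ^ ω := by
  classical
  obtain ⟨δ, hδ, hδ0⟩ := h0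
  obtain ⟨T, hT⟩ := h1
  set T' : ℝ := max T 1 with hT'def
  have hT'1 : (1:ℝ) ≤ T' := le_max_right T 1
  have hT'pos : (0:ℝ) < T' := lt_of_lt_of_le one_pos hT'1
  have hT' : ∀ t : ℝ, T' ≤ t → χ t = 1 := fun t ht => hT t ((le_max_left T 1).trans ht)
  obtain ⟨P, M, hPmem, hM, hPbound⟩ := stmt17_taylor φ hφ hsupp k hk
  have hkne : k ≠ 0 := by omega
  have hχc : Continuous χ := hχ.continuous
  have hφcont : Continuous φ := hφ.continuous
  refine ⟨M * Real.pi * T' ^ ((1:ℝ)/2) + 1, by positivity, (1:ℝ)/2, by norm_num, ?_⟩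
  rintro ε₁ ⟨hε₁, hε₁1⟩ ε₂ ⟨hε₂, hε₂1⟩
  set W : ℂ → ℂ := fun z =>
    (χ (‖z‖ ^ 2 / ε₁) : ℂ) * ((χ (‖z‖ ^ 4 / ε₂) : ℂ) - 1) with hWdef
  set r : ℝ := (T' * ε₂) ^ ((1:ℝ)/4) with hrdef
  have hr0 : 0 ≤ r := Real.rpow_nonneg (by positivity) _
  have hr4 : r ^ (4:ℕ) = T' * ε₂ := by
    rw [hrdef, ← Real.rpow_natCast ((T' * ε₂) ^ ((1:ℝ)/4)) 4,
      ← Real.rpow_mul (by positivity)]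
    norm_num
  have hc2cont : Continuous fun z : ℂ => (χ (‖z‖ ^ 4 / ε₂) : ℂ) :=
    Complex.continuous_ofReal.comp (hχc.comp ((continuous_norm.pow 4).div_const ε₂))
  -- `W` vanishes outside the ball of radius `r`
  have hW0 : ∀ z : ℂ, r < ‖z‖ → W z = 0 := by
    intro z hz
    have h4 : T' * ε₂ < ‖z‖ ^ 4 := by
      rw [← hr4]
      exact pow_lt_pow_left₀ hz hr0 (by norm_num)
    have h5 : T' ≤ ‖z‖ ^ 4 / ε₂ := by
      rw [le_div_iff₀ hε₂]; nlinarith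
    have hone : χ (‖z‖ ^ 4 / ε₂) = 1 := hT' _ h5
    rw [hWdef]
    simp only [hone]
    norm_num
  -- `W` is bounded by 1 in norm
  have hWbound : ∀ z : ℂ, ‖W z‖ ≤ 1 := by
    intro z
    rw [hWdef]
    simp only
    rw [norm_mul]
    have hb1 : ‖(χ (‖z‖ ^ 2 / ε₁) : ℂ)‖ ≤ 1 := by
      rw [Complex.norm_real, Real.norm_eq_abs, abs_le]
      obtain ⟨hl, hu⟩ := hrange (‖z‖ ^ 2 / ε₁)
      constructor <;> linarith
    have hb2 : ‖(χ (‖z‖ ^ 4 / ε₂) : ℂ) - 1‖ ≤ 1 := by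
      have : (χ (‖z‖ ^ 4 / ε₂) : ℂ) - 1 = ((χ (‖z‖ ^ 4 / ε₂) - 1 : ℝ) : ℂ) := by
        push_cast; ring
      rw [this, Complex.norm_real, Real.norm_eq_abs, abs_le]
      obtain ⟨hl, hu⟩ := hrange (‖z‖ ^ 4 / ε₂)
      constructor <;> linarith
    calc ‖(χ (‖z‖ ^ 2 / ε₁) : ℂ)‖ * ‖(χ (‖z‖ ^ 4 / ε₂) : ℂ) - 1‖
        ≤ 1 * 1 := mul_le_mul hb1 hb2 (norm_nonneg _) zero_le_one
      _ = 1 := one_mul 1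
  -- integrability of the two integrands in the statement
  have hI1 : Integrable (fun z : ℂ => (χ (‖z‖ ^ 2 / ε₁) : ℂ)
      * (χ (‖z‖ ^ 4 / ε₂) : ℂ) * (φ z / z ^ k)) := by
    have heq : (fun z : ℂ => (χ (‖z‖ ^ 2 / ε₁) : ℂ)
          * (χ (‖z‖ ^ 4 / ε₂) : ℂ) * (φ z / z ^ k))
        = fun z : ℂ => (χ (‖z‖ ^ 2 / ε₁) : ℂ)
            * (((χ (‖z‖ ^ 4 / ε₂) : ℂ) * φ z) / z ^ k) := by
      funext z; ring
    rw [heq]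
    apply (stmt17_cont hχc hδ hδ0 hε₁ _ (hc2cont.mul hφcont) k).integrable_of_hasCompactSupport
    apply HasCompactSupport.intro hsupp
    intro x hx
    rw [Pi.mul_apply, image_eq_zero_of_notMem_tsupport hx]
    simp
  have hI2 : Integrable (fun z : ℂ => (χ (‖z‖ ^ 2 / ε₁) : ℂ) * (φ z / z ^ k)) := by
    apply (stmt17_cont hχc hδ hδ0 hε₁ _ hφcont k).integrable_of_hasCompactSupport
    apply HasCompactSupport.intro hsupp
    intro x hx
    rw [image_eq_zero_of_notMem_tsupport hx]
    simp
  -- key: integrals of monomials against W vanish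
  have hspan : ∀ g ∈ stmt17Mspan (k - 1),
      Integrable (fun z : ℂ => W z * (g z / z ^ k))
        ∧ (∫ z : ℂ, W z * (g z / z ^ k)) = 0 := by
    intro g hg
    induction hg using Submodule.span_induction with
    | mem x hx =>
      obtain ⟨a, b, hab, rfl⟩ := hx
      have hak : a ≤ k - 1 := le_trans (Nat.le_add_right a b) hab
      have hcont : Continuous fun z : ℂ =>
          W z * ((z ^ a * (starRingEnd ℂ) z ^ b) / z ^ k) := by
        have heq : (fun z : ℂ => W z * ((z ^ a * (starRingEnd ℂ) z ^ b) / z ^ k))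
            = fun z : ℂ => (χ (‖z‖ ^ 2 / ε₁) : ℂ)
                * ((((χ (‖z‖ ^ 4 / ε₂) : ℂ) - 1)
                    * (z ^ a * (starRingEnd ℂ) z ^ b)) / z ^ k) := by
          funext z; rw [hWdef]; ring
        rw [heq]
        exact stmt17_cont hχc hδ hδ0 hε₁ _
          ((hc2cont.sub continuous_const).mul
            ((continuous_pow a).mul (Complex.continuous_conj.pow b))) k
      have hcs : HasCompactSupport fun z : ℂ =>
          W z * ((z ^ a * (starRingEnd ℂ) z ^ b) / z ^ k) := by
        apply HasCompactSupport.intro (isCompact_closedBall (0:ℂ) r)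
        intro x hx
        have hxr : r < ‖x‖ := by
          have := Metric.mem_closedBall.not.mp hx
          rw [Complex.dist_eq, sub_zero] at this
          linarith [not_le.mp this]
        rw [hW0 x hxr, zero_mul]
      refine ⟨hcont.integrable_of_hasCompactSupport hcs, ?_⟩
      -- rotation argument
      set n' : ℕ := k + b - a with hn'def
      have hn'pos : 1 ≤ n' := by omega
      have hna : n' + a = k + b := by omega
      set ρ : Circle := Circle.exp (Real.pi / n') with hρdef
      have hρ0 : (ρ : ℂ) ≠ 0 := Circle.coe_ne_zero ρ
      have hρn : (ρ : ℂ) ^ n' = -1 := by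
        rw [hρdef, Circle.coe_exp, ← Complex.exp_nat_mul]
        have hn0 : (n' : ℂ) ≠ 0 := Nat.cast_ne_zero.mpr (by omega)
        have : (n' : ℂ) * (↑(Real.pi / n') * Complex.I) = ↑Real.pi * Complex.I := by
          push_cast
          field_simp
        rw [this, Complex.exp_pi_mul_I]
      have hsc : (ρ : ℂ) ^ a * ((ρ : ℂ)⁻¹) ^ b / (ρ : ℂ) ^ k = ((ρ : ℂ)⁻¹) ^ n' := by
        have h1 : (ρ : ℂ) ^ (n' + a) = (ρ : ℂ) ^ (k + b) := by rw [hna]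
        rw [pow_add, pow_add] at h1
        rw [inv_pow, inv_pow]
        field_simp
        linear_combination h1
      have hfe : ∀ z : ℂ, (fun w : ℂ => W w * ((w ^ a * (starRingEnd ℂ) w ^ b) / w ^ k))
            ((ρ : ℂ) * z)
          = ((ρ : ℂ)⁻¹) ^ n'
            * (fun w : ℂ => W w * ((w ^ a * (starRingEnd ℂ) w ^ b) / w ^ k)) z := by
        intro z
        simp only
        have hWrot : W ((ρ : ℂ) * z) = W z := by
          rw [hWdef]
          simp only [norm_mul, Circle.norm_coe, one_mul]
        have hcj : (starRingEnd ℂ) ((ρ : ℂ) * z) = (ρ : ℂ)⁻¹ * (starRingEnd ℂ) z := by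
          rw [map_mul]
          congr 1
          rw [← Circle.coe_inv_eq_conj, Circle.coe_inv]
        rw [hWrot, hcj, mul_pow, mul_pow, mul_pow, mul_mul_mul_comm, mul_div_mul_comm, hsc]
        ring
      have hcn1 : ((ρ : ℂ)⁻¹) ^ n' ≠ 1 := by
        rw [inv_pow, hρn]
        norm_num
      exact stmt17_rot_zero hcn1 hfe
    | zero =>
      have heq : (fun z : ℂ => W z * ((0 : ℂ → ℂ) z / z ^ k)) = fun _ : ℂ => (0:ℂ) := by
        funext z; simp
      rw [heq]
      exact ⟨integrable_zero _ _ _, integral_zero _ _⟩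
    | add x y hx hy ihx ihy =>
      have heq : (fun z : ℂ => W z * ((x + y) z / z ^ k))
          = fun z : ℂ => W z * (x z / z ^ k) + W z * (y z / z ^ k) := by
        funext z
        simp only [Pi.add_apply]
        rw [add_div]
        ring
      rw [heq]
      refine ⟨ihx.1.add ihy.1, ?_⟩
      rw [integral_add ihx.1 ihy.1, ihx.2, ihy.2, add_zero]
    | smul a x hx ih =>
      have heq : (fun z : ℂ => W z * ((a • x) z / z ^ k))
          = fun z : ℂ => a * (W z * (x z / z ^ k)) := by
        funext z
        simp only [Pi.smul_apply, smul_eq_mul]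
        rw [mul_div_assoc]
        ring
      rw [heq]
      refine ⟨ih.1.const_mul a, ?_⟩
      rw [integral_const_mul, ih.2, mul_zero]
  -- rewrite the difference of the two integrals
  have hWφint : Integrable (fun z : ℂ => W z * (φ z / z ^ k)) := by
    refine (hI1.sub hI2).congr (Filter.Eventually.of_forall fun z => ?_)
    simp only [Pi.sub_apply]
    rw [hWdef]
    ring
  have hdiff : (∫ z : ℂ, (χ (‖z‖ ^ 2 / ε₁) : ℂ) * (χ (‖z‖ ^ 4 / ε₂) : ℂ)
        * (φ z / z ^ k)) - (∫ z : ℂ, (χ (‖z‖ ^ 2 / ε₁) : ℂ) * (φ z / z ^ k))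
      = ∫ z : ℂ, W z * (φ z / z ^ k) := by
    rw [← integral_sub hI1 hI2]
    refine integral_congr_ae (Filter.Eventually.of_forall fun z => ?_)
    rw [hWdef]
    ring
  obtain ⟨hPint, hPzero⟩ := hspan P hPmem
  have hsplit : (∫ z : ℂ, W z * (φ z / z ^ k)) = ∫ z : ℂ, W z * ((φ z - P z) / z ^ k) := by
    have h1 : (∫ z : ℂ, W z * ((φ z - P z) / z ^ k))
        = (∫ z : ℂ, W z * (φ z / z ^ k)) - ∫ z : ℂ, W z * (P z / z ^ k) := by
      rw [← integral_sub hWφint hPint]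
      refine integral_congr_ae (Filter.Eventually.of_forall fun z => ?_)
      show W z * ((φ z - P z) / z ^ k) = W z * (φ z / z ^ k) - W z * (P z / z ^ k)
      rw [sub_div]
      ring
    rw [h1, hPzero, sub_zero]
  rw [hdiff, hsplit]
  -- final estimate
  have hrem : ∀ z : ℂ, ‖W z * ((φ z - P z) / z ^ k)‖ ≤ M := by
    intro z
    rw [norm_mul]
    have h2 : ‖(φ z - P z) / z ^ k‖ ≤ M := by
      rcases eq_or_ne z 0 with rfl | hz
      · rw [zero_pow hkne, div_zero, norm_zero]
        exact hM.le
      · rw [norm_div, norm_pow]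
        rw [div_le_iff₀ (pow_pos (norm_pos_iff.mpr hz) k)]
        exact hPbound z
    calc ‖W z‖ * ‖(φ z - P z) / z ^ k‖ ≤ 1 * M :=
          mul_le_mul (hWbound z) h2 (norm_nonneg _) zero_le_one
      _ = M := one_mul M
  have hout : ∀ z : ℂ, z ∉ Metric.closedBall (0:ℂ) r → W z * ((φ z - P z) / z ^ k) = 0 := by
    intro z hz
    have hxr : r < ‖z‖ := by
      have := Metric.mem_closedBall.not.mp hz
      rw [Complex.dist_eq, sub_zero] at this
      linarith [not_le.mp this]
    rw [hW0 z hxr, zero_mul]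
  rw [← setIntegral_eq_integral_of_forall_compl_eq_zero hout]
  have hvol : (volume (Metric.closedBall (0:ℂ) r)).toReal = Real.pi * r ^ 2 := by
    rw [Complex.volume_closedBall, ENNReal.toReal_mul, ENNReal.toReal_pow,
      ENNReal.toReal_ofReal hr0, ENNReal.coe_toReal, NNReal.coe_real_pi, mul_comm]
  have hball := norm_setIntegral_le_of_norm_le_const
    (measure_closedBall_lt_top : volume (Metric.closedBall (0:ℂ) r) < ⊤)
    (fun z _ => hrem z)
  have hr2 : r ^ (2:ℕ) = T' ^ ((1:ℝ)/2) * ε₂ ^ ((1:ℝ)/2) := by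
    rw [hrdef, ← Real.rpow_natCast ((T' * ε₂) ^ ((1:ℝ)/4)) 2,
      ← Real.rpow_mul (by positivity)]
    norm_num
    rw [Real.mul_rpow hT'pos.le hε₂.le]
  calc ‖∫ z in Metric.closedBall (0:ℂ) r, W z * ((φ z - P z) / z ^ k)‖
      ≤ M * (volume (Metric.closedBall (0:ℂ) r)).toReal := hball
    _ = M * Real.pi * (T' ^ ((1:ℝ)/2) * ε₂ ^ ((1:ℝ)/2)) := by
        rw [hvol, hr2]; ring
    _ = (M * Real.pi * T' ^ ((1:ℝ)/2)) * ε₂ ^ ((1:ℝ)/2) := by ring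
    _ ≤ (M * Real.pi * T' ^ ((1:ℝ)/2) + 1) * ε₂ ^ ((1:ℝ)/2) := by
        have h1 : (0:ℝ) ≤ ε₂ ^ ((1:ℝ)/2) := Real.rpow_nonneg hε₂.le _
        nlinarith
end
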